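/- arXiv:2410.16600 — 2 statements merged into one kernel-verified Lean document; each statement's English description precedes it below -/
import Mathlib

section
/- Let A be a real m×d matrix with full row rank m, b ∈ ℝ^m, and let ℓ : ℝ^d → ℝ be convex and differentiable. If μ and z both lie in the set {x ∈ Δ^{d−1} : Ax = b}, then ℓ(μ) − ℓ(z) ≤ √2 · ‖Π_A ∇ℓ(μ)‖₂. -/
/-!
By convexity, `ℓ μ - ℓ z` is at most the directional derivative `⟪∇ℓ(μ), μ - z⟫`.
Since `A (μ - z) = 0`, the symmetric matrix `Π_A` fixes `μ - z`, so the gradient may be replaced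
by its projection `Π_A ∇ℓ(μ)`. Cauchy–Schwarz and `‖μ - z‖₂² ≤ ∑ₖ (μₖ + zₖ) = 2` on the simplex finish the proof.
-/

open Matrix

/-- Tangent-space projection matrix `Π_A = I − Aᵀ(AAᵀ)⁻¹A`. -/
noncomputable def projMat {m d : ℕ} (A : Matrix (Fin m) (Fin d) ℝ) :
    Matrix (Fin d) (Fin d) ℝ :=
  1 - Aᵀ * (A * Aᵀ)⁻¹ * A

/-- The gradient of `f : ℝ^d → ℝ` at `x`. -/
noncomputable def grad {d : ℕ} (f : (Fin d → ℝ) → ℝ) (x : Fin d → ℝ) : Fin d → ℝ :=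
  fun k => fderiv ℝ f x (Pi.single k 1)

theorem ConvexOn.sub_le_of_hasFDerivAt {E : Type*} [NormedAddCommGroup E] [NormedSpace ℝ E]
    {s : Set E} {f : E → ℝ} {f' : E →L[ℝ] ℝ} {x y : E} (hf : ConvexOn ℝ s f)
    (hx : x ∈ s) (hy : y ∈ s) (hf' : HasFDerivAt f f' x) :
    f x - f y ≤ f' (x - y) := by
  set line : ℝ →ᵃ[ℝ] E := AffineMap.lineMap y x
  have hline : ConvexOn ℝ (line ⁻¹' s) (f ∘ line) := hf.comp_affineMap line
  have hderiv : HasDerivAt (f ∘ line) (f' (x - y)) 1 := by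
    rw [show x = line 1 by simp [line]] at hf'
    exact hf'.comp_hasDerivAt 1 AffineMap.hasDerivAt_lineMap
  simpa [slope_def_field, line] using
    hline.slope_le_of_hasDerivAt (x := 0) (by simpa [line]) (by simpa [line]) zero_lt_one hderiv

theorem ContinuousLinearMap.apply_eq_dotProduct {R ι : Type*} [CommSemiring R]
    [TopologicalSpace R] [Fintype ι] [DecidableEq ι] (L : (ι → R) →L[R] R) (v : ι → R) :
    L v = (fun k => L (Pi.single k 1)) ⬝ᵥ v := by
  conv_lhs => rw [← Finset.univ_sum_single v]
  simp only [map_sum, dotProduct]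
  refine Finset.sum_congr rfl fun k _ => ?_
  rw [mul_comm, ← smul_eq_mul, ← map_smul, ← Pi.single_smul', smul_eq_mul, mul_one]

theorem fderiv_apply_eq_grad_dotProduct {d : ℕ} (f : (Fin d → ℝ) → ℝ) (x v : Fin d → ℝ) :
    fderiv ℝ f x v = grad f x ⬝ᵥ v :=
  (fderiv ℝ f x).apply_eq_dotProduct v

section projMat

variable {m d : ℕ} (A : Matrix (Fin m) (Fin d) ℝ)

theorem projMat_transpose : (projMat A)ᵀ = projMat A := by
  simp [projMat, transpose_nonsing_inv, Matrix.mul_assoc]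

variable {A}

theorem projMat_mulVec_of_mulVec_eq_zero {v : Fin d → ℝ} (hv : A *ᵥ v = 0) :
    projMat A *ᵥ v = v := by
  simp [projMat, sub_mulVec, ← mulVec_mulVec, hv]

theorem projMat_mulVec_dotProduct_of_mulVec_eq_zero {v : Fin d → ℝ} (hv : A *ᵥ v = 0)
    (g : Fin d → ℝ) : (projMat A *ᵥ g) ⬝ᵥ v = g ⬝ᵥ v := by
  rw [dotProduct_comm, dotProduct_mulVec, ← mulVec_transpose, projMat_transpose,
    projMat_mulVec_of_mulVec_eq_zero hv, dotProduct_comm]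

end projMat

theorem sum_sq_sub_le_two_of_mem_stdSimplex {𝕜 ι : Type*} [Field 𝕜] [LinearOrder 𝕜]
    [IsStrictOrderedRing 𝕜] [Fintype ι] {x y : ι → 𝕜}
    (hx : x ∈ stdSimplex 𝕜 ι) (hy : y ∈ stdSimplex 𝕜 ι) :
    ∑ i, (x i - y i) ^ 2 ≤ 2 := by
  calc ∑ i, (x i - y i) ^ 2 ≤ ∑ i, (x i + y i) :=
        Finset.sum_le_sum fun i _ => by
          obtain ⟨hx0, hx1⟩ := mem_Icc_of_mem_stdSimplex hx i
          obtain ⟨hy0, hy1⟩ := mem_Icc_of_mem_stdSimplex hy i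
          nlinarith
    _ = 2 := by rw [Finset.sum_add_distrib, hx.2, hy.2]; norm_num

theorem exploitability_le_sqrt_two_mul_proj_grad_norm_general
    {m d : ℕ} (A : Matrix (Fin m) (Fin d) ℝ)
    (b : Fin m → ℝ) (ℓ : (Fin d → ℝ) → ℝ)
    (hconv : ConvexOn ℝ Set.univ ℓ) (hdiff : Differentiable ℝ ℓ)
    (μ z : Fin d → ℝ)
    (hμ : μ ∈ stdSimplex ℝ (Fin d)) (hμb : A *ᵥ μ = b)
    (hz : z ∈ stdSimplex ℝ (Fin d)) (hzb : A *ᵥ z = b) :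
    ℓ μ - ℓ z ≤
      Real.sqrt 2 * Real.sqrt (∑ k, (projMat A *ᵥ grad ℓ μ) k ^ 2) := by
  have hker : A *ᵥ (μ - z) = 0 := by rw [mulVec_sub, hμb, hzb, sub_self]
  calc ℓ μ - ℓ z ≤ fderiv ℝ ℓ μ (μ - z) :=
        hconv.sub_le_of_hasFDerivAt trivial trivial (hdiff μ).hasFDerivAt
    _ = (projMat A *ᵥ grad ℓ μ) ⬝ᵥ (μ - z) := by
        rw [fderiv_apply_eq_grad_dotProduct, projMat_mulVec_dotProduct_of_mulVec_eq_zero hker]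
    _ ≤ Real.sqrt (∑ k, (projMat A *ᵥ grad ℓ μ) k ^ 2) * Real.sqrt (∑ k, (μ - z) k ^ 2) :=
        Real.sum_mul_le_sqrt_mul_sqrt _ _ _
    _ ≤ Real.sqrt (∑ k, (projMat A *ᵥ grad ℓ μ) k ^ 2) * Real.sqrt 2 := by
        gcongr
        exact sum_sq_sub_le_two_of_mem_stdSimplex hμ hz
    _ = Real.sqrt 2 * Real.sqrt (∑ k, (projMat A *ᵥ grad ℓ μ) k ^ 2) := mul_comm _ _

/-- If `ℓ : ℝ^d → ℝ` is convex and differentiable, `A` has full row rank `m`, and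
`μ, z` both lie in `{x ∈ Δ^{d−1} : Ax = b}`, then
`ℓ(μ) − ℓ(z) ≤ √2 ⬝ ‖Π_A ∇ℓ(μ)‖₂`. -/
theorem exploitability_le_sqrt_two_mul_proj_grad_norm
    {m d : ℕ} (A : Matrix (Fin m) (Fin d) ℝ) (hA : A.rank = m)
    (b : Fin m → ℝ) (ℓ : (Fin d → ℝ) → ℝ)
    (hconv : ConvexOn ℝ Set.univ ℓ) (hdiff : Differentiable ℝ ℓ)
    (μ z : Fin d → ℝ)
    (hμ : μ ∈ stdSimplex ℝ (Fin d)) (hμb : A *ᵥ μ = b)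
    (hz : z ∈ stdSimplex ℝ (Fin d)) (hzb : A *ᵥ z = b) :
    ℓ μ - ℓ z ≤
      Real.sqrt 2 * Real.sqrt (∑ k, (projMat A *ᵥ grad ℓ μ) k ^ 2) :=
  exploitability_le_sqrt_two_mul_proj_grad_norm_general A b ℓ hconv hdiff μ z hμ hμb hz hzb
end

section
/- Let A be a real m×d matrix with full row rank m, b ∈ ℝ^m, and let f : ℝ^d → ℝ be concave and differentiable. Let x ∈ ℝ^d satisfy x_k > 0 for every k and Ax = b. Then x maximizes f over the feasible set {z ∈ ℝ^d : z ≥ 0 componentwise, Az = b} if and only if Π_A ∇f(x) = 0. -/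
/-! A vector `g` satisfies `Π_A g = 0` iff it is orthogonal to `ker A`: `Π_A g = g - Aᵀ w`,
with `w = (AAᵀ)⁻¹ A g`, lies in `ker A`, so `|Π_A g|² = g ⬝ Π_A g`. Since `x` is interior to the
orthant, every direction of `ker A` is feasible from `x` in both senses, so a maximizer has
vanishing derivative on `ker A`. Conversely, for concave `f` the tangent-plane bound
`f z ≤ f x + Df(x)(z - x)` makes such an `x` a maximizer on all of `x + ker A`. -/

open Matrix

namespace Matrix

variable {K : Type*} [Field K] {m n : Type*} [Fintype m] [Fintype n]

theorem isUnit_of_rank_eq_card [DecidableEq n] {B : Matrix n n K} (hB : B.rank = Fintype.card n) :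
    IsUnit B := by
  refine mulVec_surjective_iff_isUnit.mp fun y => ?_
  have : LinearMap.range B.mulVecLin = ⊤ :=
    Submodule.eq_top_of_finrank_eq (by rw [← rank, hB, Module.finrank_fintype_fun_eq_card])
  exact LinearMap.range_eq_top.mp this y

theorem isUnit_det_mul_transpose_of_rank_eq_card [LinearOrder K] [IsStrictOrderedRing K]
    [DecidableEq m] {A : Matrix m n K} (hA : A.rank = Fintype.card m) :
    IsUnit (A * Aᵀ).det :=
  (isUnit_iff_isUnit_det _).mp (isUnit_of_rank_eq_card (by rwa [rank_self_mul_transpose]))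

end Matrix

section Projection

variable {m d : ℕ} (A : Matrix (Fin m) (Fin d) ℝ)

theorem projMat_mulVec (g : Fin d → ℝ) :
    projMat A *ᵥ g = g - Aᵀ *ᵥ ((A * Aᵀ)⁻¹ *ᵥ (A *ᵥ g)) := by
  simp only [projMat, sub_mulVec, one_mulVec, mulVec_mulVec, Matrix.mul_assoc]

theorem mul_projMat (hA : IsUnit (A * Aᵀ).det) : A * projMat A = 0 := by
  rw [projMat, Matrix.mul_sub, Matrix.mul_one, ← Matrix.mul_assoc, ← Matrix.mul_assoc,
    mul_nonsing_inv _ hA, Matrix.one_mul, sub_self]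

theorem projMat_mulVec_eq_zero_iff (hA : IsUnit (A * Aᵀ).det) (g : Fin d → ℝ) :
    projMat A *ᵥ g = 0 ↔ ∀ v, A *ᵥ v = 0 → g ⬝ᵥ v = 0 := by
  set w := (A * Aᵀ)⁻¹ *ᵥ (A *ᵥ g)
  have hPg : projMat A *ᵥ g = g - Aᵀ *ᵥ w := projMat_mulVec A g
  constructor
  · intro hP v hv
    rw [hPg, sub_eq_zero] at hP
    rw [hP, dotProduct_comm, dotProduct_mulVec, vecMul_transpose, hv, zero_dotProduct]
  · intro hg
    have hker : A *ᵥ (projMat A *ᵥ g) = 0 := by rw [mulVec_mulVec, mul_projMat A hA, zero_mulVec]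
    refine dotProduct_self_eq_zero.mp ?_
    calc projMat A *ᵥ g ⬝ᵥ projMat A *ᵥ g
        = projMat A *ᵥ g ⬝ᵥ g - A *ᵥ (projMat A *ᵥ g) ⬝ᵥ w := by
          nth_rewrite 2 [hPg]
          rw [dotProduct_sub, dotProduct_mulVec, vecMul_transpose]
      _ = 0 := by rw [dotProduct_comm, hg _ hker, hker, zero_dotProduct, sub_zero]

end Projection

section Calculus

variable {E : Type*} [NormedAddCommGroup E] [NormedSpace ℝ E] {f : E → ℝ} {f' : E →L[ℝ] ℝ}
  {x : E}

theorem HasFDerivAt.apply_eq_zero_of_isLocalMax_line (hf : HasFDerivAt f f' x) {v : E}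
    (hmax : IsLocalMax (fun t : ℝ => f (x + t • v)) 0) : f' v = 0 := by
  have hline : HasDerivAt (fun t : ℝ => x + t • v) v 0 := by
    simpa using ((hasDerivAt_id (0 : ℝ)).smul_const v).const_add x
  have hf0 : HasFDerivAt f f' (x + (0 : ℝ) • v) := by rwa [zero_smul, add_zero]
  exact hmax.hasDerivAt_eq_zero (hf0.comp_hasDerivAt 0 hline)

theorem ConcaveOn.le_add_of_hasFDerivAt {s : Set E} (hconc : ConcaveOn ℝ s f) (hx : x ∈ s)
    {y : E} (hy : y ∈ s) (hf : HasFDerivAt f f' x) : f y ≤ f x + f' (y - x) := by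
  have hline : HasDerivAt (f ∘ (AffineMap.lineMap x y : ℝ →ᵃ[ℝ] E)) (f' (y - x)) 0 := by
    refine HasFDerivAt.comp_hasDerivAt _ ?_ AffineMap.hasDerivAt_lineMap
    rwa [AffineMap.lineMap_apply_zero]
  have hslope := (hconc.comp_affineMap (AffineMap.lineMap x y)).slope_le_of_hasDerivAt
    (by simpa using hx) (by simpa using hy) zero_lt_one hline
  simp only [slope_def_field, Function.comp_apply, AffineMap.lineMap_apply_zero,
    AffineMap.lineMap_apply_one, sub_zero, div_one] at hslope
  linarith

end Calculus

theorem eventually_pos_add_smul {ι : Type*} [Finite ι] {x : ι → ℝ} (hx : ∀ k, 0 < x k)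
    (v : ι → ℝ) : ∀ᶠ t in nhds (0 : ℝ), ∀ k, 0 < (x + t • v) k := by
  refine Filter.eventually_all.mpr fun k => ?_
  have hcont : Continuous fun t : ℝ => (x + t • v) k := by fun_prop
  exact (hcont.tendsto 0).eventually (lt_mem_nhds (by simpa using hx k))

/-- KKT conditions: a strictly positive feasible point `x` (with `Ax = b`) maximizes a
concave differentiable `f` over `{z : z ≥ 0, Az = b}` iff `Π_A ∇f(x) = 0`. -/
theorem positive_feasible_maximizer_iff_proj_grad_zero
    {m d : ℕ} (A : Matrix (Fin m) (Fin d) ℝ) (hA : A.rank = m)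
    (b : Fin m → ℝ) (f : (Fin d → ℝ) → ℝ)
    (hconc : ConcaveOn ℝ Set.univ f) (hdiff : Differentiable ℝ f)
    (x : Fin d → ℝ) (hxpos : ∀ k, 0 < x k) (hxb : A *ᵥ x = b) :
    (∀ z : Fin d → ℝ, (∀ k, 0 ≤ z k) → A *ᵥ z = b → f z ≤ f x) ↔
      projMat A *ᵥ grad f x = 0 := by
  rw [projMat_mulVec_eq_zero_iff A
    (isUnit_det_mul_transpose_of_rank_eq_card (by rwa [Fintype.card_fin]))]
  simp only [← fderiv_apply_eq_grad_dotProduct]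
  constructor
  · intro hmax v hv
    refine (hdiff x).hasFDerivAt.apply_eq_zero_of_isLocalMax_line ?_
    filter_upwards [eventually_pos_add_smul hxpos v] with t ht
    rw [zero_smul, add_zero]
    exact hmax _ (fun k => (ht k).le)
      (by rw [mulVec_add, mulVec_smul, hv, hxb, smul_zero, add_zero])
  · intro hcrit z _ hz
    have hker : A *ᵥ (z - x) = 0 := by rw [mulVec_sub, hz, hxb, sub_self]
    simpa only [hcrit _ hker, add_zero] using
      hconc.le_add_of_hasFDerivAt (Set.mem_univ x) (Set.mem_univ z) (hdiff x).hasFDerivAt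
end
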